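/- arXiv:1212.3920 — 3 statements merged into one kernel-verified Lean document; each statement's English description precedes it below -/
import Mathlib

section
/- The order parameter c is differentiable on (0,∞) and satisfies the identity c′(κ) = 1 − c(κ)² − ((n−1)/κ) c(κ) for all κ > 0. -/
/-!
Write `M_k(κ) = ∫₀^π cos^k θ e^{κ cos θ} sin^{n-2} θ dθ`, so that `c = M₁ / M₀`. Differentiating
under the integral sign gives `M_k' = M_{k+1}`, hence `c' = M₂ / M₀ - c²`. Integrating
`d/dθ (sin^{n-1} θ e^{κ cos θ})` over `[0, π]` and using `sin² = 1 - cos²` gives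
`κ (M₀ - M₂) = (n - 1) M₁`, i.e. `M₂ / M₀ = 1 - ((n - 1) / κ) c`.
-/

open MeasureTheory Real Filter

/-- The order parameter `c(κ)` of the von Mises distribution in dimension `n`. -/
noncomputable def orderParam (n : ℕ) (κ : ℝ) : ℝ :=
  (∫ θ in (0:ℝ)..π, Real.cos θ * Real.exp (κ * Real.cos θ) * Real.sin θ ^ (n - 2)) /
  (∫ θ in (0:ℝ)..π, Real.exp (κ * Real.cos θ) * Real.sin θ ^ (n - 2))

open Set

theorem hasDerivAt_intervalIntegral_of_continuous {E : Type*} [NormedAddCommGroup E]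
    [NormedSpace ℝ E] {F F' : ℝ → ℝ → E} (hF : Continuous F.uncurry) (hF' : Continuous F'.uncurry)
    (hderiv : ∀ x t, HasDerivAt (fun x => F x t) (F' x t) x) (a b x₀ : ℝ) :
    HasDerivAt (fun x => ∫ t in a..b, F x t) (∫ t in a..b, F' x₀ t) x₀ := by
  have hFx (x : ℝ) : Continuous (F x) := hF.comp (Continuous.prodMk_right x)
  have hF'x (x : ℝ) : Continuous (F' x) := hF'.comp (Continuous.prodMk_right x)
  obtain ⟨C, hC⟩ := ((isCompact_closedBall x₀ 1).prod isCompact_uIcc).exists_bound_of_continuousOn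
    (f := F'.uncurry) (s := Metric.closedBall x₀ 1 ×ˢ uIcc a b) hF'.continuousOn
  refine (intervalIntegral.hasDerivAt_integral_of_dominated_loc_of_deriv_le (bound := fun _ => C)
    (Metric.closedBall_mem_nhds x₀ one_pos) (.of_forall fun x => (hFx x).aestronglyMeasurable)
    ((hFx x₀).intervalIntegrable _ _) (hF'x x₀).aestronglyMeasurable ?_ intervalIntegrable_const
    (.of_forall fun t _ x _ => hderiv x t)).2
  exact .of_forall fun t ht x hx => hC (x, t) ⟨hx, uIoc_subset_uIcc ht⟩

noncomputable def cosMoment (m k : ℕ) (κ : ℝ) : ℝ :=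
  ∫ θ in (0:ℝ)..π, cos θ ^ k * exp (κ * cos θ) * sin θ ^ m

theorem hasDerivAt_cosMoment (m k : ℕ) (κ : ℝ) :
    HasDerivAt (cosMoment m k) (cosMoment m (k + 1) κ) κ := by
  refine hasDerivAt_intervalIntegral_of_continuous
    (F := fun x θ => cos θ ^ k * exp (x * cos θ) * sin θ ^ m)
    (F' := fun x θ => cos θ ^ (k + 1) * exp (x * cos θ) * sin θ ^ m)
    (by fun_prop) (by fun_prop) (fun x θ => ?_) _ _ κ
  have hexp : HasDerivAt (fun x => exp (x * cos θ)) (exp (x * cos θ) * cos θ) x :=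
    ((hasDerivAt_id x).mul_const (cos θ)).exp.congr_deriv (by simp)
  exact ((hexp.const_mul (cos θ ^ k)).mul_const (sin θ ^ m)).congr_deriv (by ring)

theorem cosMoment_zero_pos (m : ℕ) (κ : ℝ) : 0 < cosMoment m 0 κ := by
  refine intervalIntegral.intervalIntegral_pos_of_pos_on ((by fun_prop : Continuous _).intervalIntegrable _ _)
    (fun θ hθ => ?_) pi_pos
  have := sin_pos_of_pos_of_lt_pi hθ.1 hθ.2
  positivity

theorem cosMoment_recurrence (m : ℕ) (κ : ℝ) :
    κ * (cosMoment m 0 κ - cosMoment m 2 κ) = (m + 1) * cosMoment m 1 κ := by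
  let f (k : ℕ) (θ : ℝ) : ℝ := cos θ ^ k * exp (κ * cos θ) * sin θ ^ m
  have hf (k : ℕ) : IntervalIntegrable (f k) volume 0 π :=
    (by fun_prop : Continuous (f k)).intervalIntegrable _ _
  have hderiv (θ : ℝ) : HasDerivAt (fun θ => sin θ ^ (m + 1) * exp (κ * cos θ))
      ((m + 1) * f 1 θ - κ * (f 0 θ - f 2 θ)) θ := by
    refine (((hasDerivAt_sin θ).fun_pow (m + 1)).fun_mul
      ((hasDerivAt_cos θ).const_mul κ).exp).congr_deriv ?_
    simp only [f, Nat.add_sub_cancel, Nat.cast_add, Nat.cast_one, pow_succ, pow_zero, one_mul]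
    linear_combination -κ * exp (κ * cos θ) * sin θ ^ m * sin_sq_add_cos_sq θ
  have hftc := intervalIntegral.integral_eq_sub_of_hasDerivAt (fun θ _ => hderiv θ)
    (((hf 1).const_mul _).sub (((hf 0).sub (hf 2)).const_mul _))
  rw [intervalIntegral.integral_sub ((hf 1).const_mul _) (((hf 0).sub (hf 2)).const_mul _),
    intervalIntegral.integral_const_mul, intervalIntegral.integral_const_mul,
    intervalIntegral.integral_sub (hf 0) (hf 2)] at hftc
  simp only [sin_pi, sin_zero, zero_pow m.succ_ne_zero, zero_mul, sub_self] at hftc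
  simp only [cosMoment]
  linarith

theorem orderParam_add_two (m : ℕ) : orderParam (m + 2) = cosMoment m 1 / cosMoment m 0 := by
  ext κ
  simp [orderParam, cosMoment]

/-- The order parameter is differentiable on `(0,∞)` with
`c'(κ) = 1 - c(κ)² - ((n-1)/κ) c(κ)`. -/
theorem orderParam_hasDerivAt (n : ℕ) (hn : 2 ≤ n) (κ : ℝ) (hκ : 0 < κ) :
    HasDerivAt (orderParam n)
      (1 - orderParam n κ ^ 2 - (((n : ℝ) - 1) / κ) * orderParam n κ) κ := by
  obtain ⟨m, rfl⟩ : ∃ m, n = m + 2 := ⟨n - 2, by omega⟩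
  have hpos := cosMoment_zero_pos m κ
  have hrec := cosMoment_recurrence m κ
  rw [orderParam_add_two]
  refine ((hasDerivAt_cosMoment m 1 κ).div (hasDerivAt_cosMoment m 0 κ) hpos.ne').congr_deriv ?_
  simp only [Pi.div_apply]
  push_cast
  field_simp
  linear_combination -cosMoment m 0 κ * hrec
end

section
/- The ratio c(κ)/σ(κ) satisfies lim_{κ→0⁺} c(κ)/σ(κ) = 1/ρ_c and lim_{κ→κ_max⁻} c(κ)/σ(κ) = 0. -/
/-!
With `m = n - 2`, since `∫₀^π cos θ sin^m θ dθ = 0` and `exp x - 1 = x · dslope exp 0 x`,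
the numerator of `c(κ)` is `κ · G(κ)` with `G(κ) = ∫₀^π cos²θ · dslope exp 0 (κ cos θ) · sin^m θ dθ`. Both `G` and the
denominator `D` are continuous in `κ`, so `c(κ)/κ → G(0)/D(0) = 1/n` by the reduction formula for
`∫ sin^m`. As `κ → 0⁺` also `σ(κ) → 0⁺`, hence `κ/σ(κ) = h(σ κ)/σ κ → L` and `c/σ → L/n = 1/ρ_c`.
As `κ → κ_max⁻`, `σ(κ) → ∞` while `|c(κ)| ≤ 1`.
-/

open MeasureTheory Real Filter

open Set Topology

lemma integral_cos_mul_sin_pow (m : ℕ) : ∫ θ in 0..π, cos θ * sin θ ^ m = 0 := by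
  simpa [mul_comm] using integral_sin_pow_mul_cos_pow_odd (a := 0) (b := π) m 0

lemma integral_cos_sq_mul_sin_pow (m : ℕ) :
    ∫ θ in 0..π, cos θ ^ 2 * sin θ ^ m = (∫ θ in 0..π, sin θ ^ m) / (m + 2) := by
  have hsplit : ∀ θ, cos θ ^ 2 * sin θ ^ m = sin θ ^ m - sin θ ^ (m + 2) := fun θ => by
    rw [cos_sq', pow_add]; ring
  simp_rw [hsplit]
  rw [intervalIntegral.integral_sub (by apply Continuous.intervalIntegrable; fun_prop)
    (by apply Continuous.intervalIntegrable; fun_prop), integral_sin_pow]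
  simp only [sin_zero, sin_pi, zero_pow m.succ_ne_zero, zero_mul, sub_zero, zero_div, zero_add]
  field_simp
  ring

lemma integral_exp_mul_cos_mul_sin_pow_pos (m : ℕ) (κ : ℝ) :
    0 < ∫ θ in 0..π, exp (κ * cos θ) * sin θ ^ m :=
  intervalIntegral.intervalIntegral_pos_of_pos_on (by apply Continuous.intervalIntegrable; fun_prop)
    (fun _ hθ => mul_pos (exp_pos _) (pow_pos (sin_pos_of_pos_of_lt_pi hθ.1 hθ.2) m)) pi_pos

@[fun_prop]
lemma continuous_dslope_exp : Continuous (dslope exp 0) :=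
  continuousOn_univ.1 ((continuousOn_dslope univ_mem).2
    ⟨continuous_exp.continuousOn, differentiableAt_exp⟩)

lemma integral_cos_mul_exp_mul_cos_mul_sin_pow (m : ℕ) (κ : ℝ) :
    ∫ θ in 0..π, cos θ * exp (κ * cos θ) * sin θ ^ m
      = κ * ∫ θ in 0..π, cos θ ^ 2 * dslope exp 0 (κ * cos θ) * sin θ ^ m := by
  have hsplit : ∀ θ, cos θ * exp (κ * cos θ) * sin θ ^ m
      = cos θ * sin θ ^ m + κ * (cos θ ^ 2 * dslope exp 0 (κ * cos θ) * sin θ ^ m) := fun θ => by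
    have h := sub_smul_dslope exp 0 (κ * cos θ)
    rw [smul_eq_mul, sub_zero, exp_zero] at h
    linear_combination -(cos θ * sin θ ^ m) * h
  simp_rw [hsplit]
  rw [intervalIntegral.integral_add (by apply Continuous.intervalIntegrable; fun_prop)
    (by apply Continuous.intervalIntegrable; fun_prop), intervalIntegral.integral_const_mul,
    integral_cos_mul_sin_pow, zero_add]

theorem tendsto_orderParam_div_self {n : ℕ} (hn : 2 ≤ n) :
    Tendsto (fun κ => orderParam n κ / κ) (𝓝[≠] 0) (𝓝 (1 / n)) := by
  set m := n - 2
  set G : ℝ → ℝ := fun κ => ∫ θ in 0..π, cos θ ^ 2 * dslope exp 0 (κ * cos θ) * sin θ ^ m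
  set D : ℝ → ℝ := fun κ => ∫ θ in 0..π, exp (κ * cos θ) * sin θ ^ m
  have hG : Continuous G := by fun_prop
  have hD : Continuous D := by fun_prop
  have hD0 : 0 < D 0 := integral_exp_mul_cos_mul_sin_pow_pos m 0
  have hlim : G 0 / D 0 = 1 / n := by
    have hmn : (m : ℝ) + 2 = n := by norm_cast; omega
    simp only [G, D, zero_mul, dslope_same, Real.deriv_exp, exp_zero, mul_one, one_mul]
    rw [integral_cos_sq_mul_sin_pow, hmn, div_div_cancel_left' (integral_sin_pow_pos m).ne', one_div]
  have hcont : Tendsto (fun κ => G κ / D κ) (𝓝[≠] 0) (𝓝 (1 / n)) :=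
    hlim ▸ ((hG.continuousAt.div hD.continuousAt hD0.ne').tendsto).mono_left nhdsWithin_le_nhds
  refine hcont.congr' (eventually_nhdsWithin_of_forall fun κ (hκ : κ ≠ 0) => ?_)
  simp only [G, D]
  rw [orderParam, integral_cos_mul_exp_mul_cos_mul_sin_pow, mul_div_assoc,
    mul_div_cancel_left₀ _ hκ]

theorem abs_orderParam_le_one (n : ℕ) (κ : ℝ) : |orderParam n κ| ≤ 1 := by
  have hD := integral_exp_mul_cos_mul_sin_pow_pos (n - 2) κ
  rw [orderParam, abs_div, abs_of_pos hD, div_le_one hD]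
  refine (intervalIntegral.abs_integral_le_integral_abs pi_pos.le).trans
    (intervalIntegral.integral_mono_on pi_pos.le (by apply Continuous.intervalIntegrable; fun_prop)
      (by apply Continuous.intervalIntegrable; fun_prop) fun θ hθ => ?_)
  have hs : 0 ≤ sin θ ^ (n - 2) := pow_nonneg (sin_nonneg_of_mem_Icc hθ) _
  rw [abs_mul, abs_mul, abs_of_pos (exp_pos _), abs_of_nonneg hs]
  gcongr
  exact mul_le_of_le_one_left (exp_pos _).le (abs_cos_le_one θ)

section InverseFunction

variable {h σ : ℝ → ℝ} {κmax : EReal}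

lemma inverse_nonneg_and_apply_inverse
    (hsurj : ∀ κ : ℝ, 0 ≤ κ → (κ : EReal) < κmax → ∃ r, 0 ≤ r ∧ h r = κ)
    (hσ : ∀ r : ℝ, 0 ≤ r → σ (h r) = r) {κ : ℝ} (hκ : 0 ≤ κ) (hκmax : (κ : EReal) < κmax) :
    0 ≤ σ κ ∧ h (σ κ) = κ := by
  obtain ⟨r, hr, rfl⟩ := hsurj κ hκ hκmax
  rw [hσ r hr]
  exact ⟨hr, rfl⟩

lemma inverse_mem_Ioo_and_apply_inverse (hmono : StrictMonoOn h (Ici 0)) (h0 : h 0 = 0)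
    (hrange : ∀ r : ℝ, 0 ≤ r → 0 ≤ h r ∧ (h r : EReal) < κmax)
    (hsurj : ∀ κ : ℝ, 0 ≤ κ → (κ : EReal) < κmax → ∃ r, 0 ≤ r ∧ h r = κ)
    (hσ : ∀ r : ℝ, 0 ≤ r → σ (h r) = r) {ε κ : ℝ} (hε : 0 ≤ ε) (hκ : κ ∈ Ioo 0 (h ε)) :
    σ κ ∈ Ioo 0 ε ∧ h (σ κ) = κ := by
  obtain ⟨hσκ, hhσκ⟩ := inverse_nonneg_and_apply_inverse hsurj hσ hκ.1.le
    ((EReal.coe_lt_coe_iff.2 hκ.2).trans (hrange ε hε).2)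
  refine ⟨⟨?_, ?_⟩, hhσκ⟩
  · exact (hmono.lt_iff_lt self_mem_Ici hσκ).1 (by rw [h0, hhσκ]; exact hκ.1)
  · exact (hmono.lt_iff_lt hσκ hε).1 (by rw [hhσκ]; exact hκ.2)

lemma tendsto_div_inverse_nhdsGT_zero (hmono : StrictMonoOn h (Ici 0)) (h0 : h 0 = 0)
    (hrange : ∀ r : ℝ, 0 ≤ r → 0 ≤ h r ∧ (h r : EReal) < κmax)
    (hsurj : ∀ κ : ℝ, 0 ≤ κ → (κ : EReal) < κmax → ∃ r, 0 ≤ r ∧ h r = κ)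
    (hσ : ∀ r : ℝ, 0 ≤ r → σ (h r) = r) {L : ℝ} (hL : Tendsto (fun r => h r / r) (𝓝[>] 0) (𝓝 L)) :
    Tendsto (fun κ => κ / σ κ) (𝓝[>] 0) (𝓝 L) := by
  have hpos {ε : ℝ} (hε : 0 < ε) : 0 < h ε := h0 ▸ hmono self_mem_Ici hε.le hε
  have hσ0 : Tendsto σ (𝓝[>] 0) (𝓝[>] 0) :=
    (nhdsGT_basis 0).tendsto_right_iff.2 fun ε hε => by
      filter_upwards [Ioo_mem_nhdsGT (hpos hε)] with κ hκ
      exact (inverse_mem_Ioo_and_apply_inverse hmono h0 hrange hsurj hσ hε.le hκ).1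
  refine (hL.comp hσ0).congr' ?_
  filter_upwards [Ioo_mem_nhdsGT (hpos one_pos)] with κ hκ
  rw [Function.comp_apply,
    (inverse_mem_Ioo_and_apply_inverse hmono h0 hrange hsurj hσ zero_le_one hκ).2]

lemma tendsto_inverse_atTop (hmono : StrictMonoOn h (Ici 0))
    (hrange : ∀ r : ℝ, 0 ≤ r → 0 ≤ h r ∧ (h r : EReal) < κmax)
    (hsurj : ∀ κ : ℝ, 0 ≤ κ → (κ : EReal) < κmax → ∃ r, 0 ≤ r ∧ h r = κ)
    (hσ : ∀ r : ℝ, 0 ≤ r → σ (h r) = r) :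
    Tendsto σ (comap (fun κ : ℝ => (κ : EReal)) (𝓝[<] κmax)) atTop := by
  refine tendsto_atTop.2 fun b => ?_
  set r := max b 0
  have hr : 0 ≤ r := le_max_right b 0
  filter_upwards [preimage_mem_comap (Ioo_mem_nhdsLT_of_mem ⟨(hrange r hr).2, le_rfl⟩)]
    with κ ⟨hrκ, hκmax⟩
  have hrκ : h r < κ := EReal.coe_lt_coe_iff.1 hrκ
  obtain ⟨hσκ, hhσκ⟩ :=
    inverse_nonneg_and_apply_inverse hsurj hσ ((hrange r hr).1.trans hrκ.le) hκmax
  have : r < σ κ := (hmono.lt_iff_lt hr hσκ).1 (by rw [hhσκ]; exact hrκ)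
  exact (le_max_left b 0).trans this.le

end InverseFunction

theorem orderParam_div_sigma_limits_general (n : ℕ) (hn : 2 ≤ n)
    (h σ : ℝ → ℝ) (κmax : EReal)
    (hmono : StrictMonoOn h (Set.Ici 0))
    (h0 : h 0 = 0)
    (hrange : ∀ r : ℝ, 0 ≤ r → 0 ≤ h r ∧ (h r : EReal) < κmax)
    (hsurj : ∀ κ : ℝ, 0 ≤ κ → (κ : EReal) < κmax → ∃ r, 0 ≤ r ∧ h r = κ)
    (hσ : ∀ r : ℝ, 0 ≤ r → σ (h r) = r)
    (L : ℝ)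
    (hL : Tendsto (fun r : ℝ => h r / r) (nhdsWithin 0 (Set.Ioi 0)) (nhds L))
    (ρc : ℝ) (hρc : ρc = n / L) :
    Tendsto (fun κ : ℝ => orderParam n κ / σ κ) (nhdsWithin 0 (Set.Ioi 0))
      (nhds (1 / ρc)) ∧
    Tendsto (fun κ : ℝ => orderParam n κ / σ κ)
      (Filter.comap (fun κ : ℝ => (κ : EReal)) (nhdsWithin κmax (Set.Iio κmax)))
      (nhds 0) := by
  constructor
  · have hc := (tendsto_orderParam_div_self hn).mono_left
      (nhdsWithin_mono 0 fun κ (hκ : 0 < κ) => hκ.ne')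
    have hratio := tendsto_div_inverse_nhdsGT_zero hmono h0 hrange hsurj hσ hL
    rw [hρc, one_div_div, ← one_div_mul_eq_div]
    refine (hc.mul hratio).congr' ?_
    filter_upwards [self_mem_nhdsWithin] with κ (hκ : 0 < κ)
    rw [div_mul_div_cancel₀ hκ.ne']
  · simp_rw [div_eq_mul_inv]
    exact isBoundedUnder_le_mul_tendsto_zero
      (isBoundedUnder_of ⟨1, fun κ => abs_orderParam_le_one n κ⟩)
      (tendsto_inv_atTop_zero.comp (tendsto_inverse_atTop hmono hrange hsurj hσ))

/-- `c(κ)/σ(κ) → 1/ρ_c` as `κ → 0⁺` and `c(κ)/σ(κ) → 0` as `κ → κmax⁻`. -/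
theorem orderParam_div_sigma_limits (n : ℕ) (hn : 2 ≤ n)
    (h σ : ℝ → ℝ) (κmax : EReal) (hκmax : 0 < κmax)
    (hcont : ContinuousOn h (Set.Ici 0)) (hmono : StrictMonoOn h (Set.Ici 0))
    (h0 : h 0 = 0)
    (hrange : ∀ r : ℝ, 0 ≤ r → 0 ≤ h r ∧ (h r : EReal) < κmax)
    (hsurj : ∀ κ : ℝ, 0 ≤ κ → (κ : EReal) < κmax → ∃ r, 0 ≤ r ∧ h r = κ)
    (hσ : ∀ r : ℝ, 0 ≤ r → σ (h r) = r)
    (L : ℝ) (hLpos : 0 < L)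
    (hL : Tendsto (fun r : ℝ => h r / r) (nhdsWithin 0 (Set.Ioi 0)) (nhds L))
    (ρc : ℝ) (hρc : ρc = n / L) :
    Tendsto (fun κ : ℝ => orderParam n κ / σ κ) (nhdsWithin 0 (Set.Ioi 0))
      (nhds (1 / ρc)) ∧
    Tendsto (fun κ : ℝ => orderParam n κ / σ κ)
      (Filter.comap (fun κ : ℝ => (κ : EReal)) (nhdsWithin κmax (Set.Iio κmax)))
      (nhds 0) :=
  orderParam_div_sigma_limits_general n hn h σ κmax hmono h0 hrange hsurj hσ L hL ρc hρc
end

section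
/- With σ₀(κ) = (√(1+4κ) − 1)/2, one has the large-κ behavior c(κ)/σ₀(κ) ∼ 1/√κ; precisely, √κ · c(κ)/σ₀(κ) → 1 as κ → ∞. -/
/-!
`c(κ)` is the mean of `cos θ` for the weight `e^{κ cos θ} sin^{n-2} θ` on `[0, π]`. For fixed
`δ ∈ (0, π)` the weight is at most `e^{κ cos δ}` on `[δ, π]` and at least a constant times
`e^{κ cos (δ/2)}` on `[δ/4, δ/2]`, so `[δ, π]` carries an exponentially small fraction of the
mass; hence `0 ≤ 1 - c(κ) ≤ 1 - cos δ + o(1)` and `c(κ) → 1`. Independently,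
`σ₀(κ)/√κ = √(4 + 1/κ)/2 - 1/(2√κ) → 1`.
-/

open MeasureTheory Real Filter

/-- The inverse `σ₀` of `h(r) = r + r²`, arising from `ν(|J|) = |J|`, `τ(|J|) = 1/(1+|J|)`. -/
noncomputable def σ₀ (κ : ℝ) : ℝ := (Real.sqrt (1 + 4 * κ) - 1) / 2

open Set intervalIntegral
open scoped Topology

namespace VonMises

noncomputable def weight (m : ℕ) (κ θ : ℝ) : ℝ := exp (κ * cos θ) * sin θ ^ m

variable {m : ℕ} {κ δ θ : ℝ}

@[fun_prop]
lemma continuous_weight (m : ℕ) (κ : ℝ) : Continuous (weight m κ) := by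
  unfold weight; fun_prop

lemma intervalIntegrable_weight (m : ℕ) (κ a b : ℝ) :
    IntervalIntegrable (weight m κ) volume a b :=
  (continuous_weight m κ).intervalIntegrable a b

lemma weight_nonneg (hθ : θ ∈ Icc 0 π) : 0 ≤ weight m κ θ :=
  mul_nonneg (exp_pos _).le (pow_nonneg (sin_nonneg_of_nonneg_of_le_pi hθ.1 hθ.2) m)

lemma weight_nonneg_ae : 0 ≤ᵐ[volume.restrict (Ioc 0 π)] weight m κ :=
  (ae_restrict_iff' measurableSet_Ioc).2 <|
    .of_forall fun _ hθ ↦ weight_nonneg (Ioc_subset_Icc_self hθ)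

lemma integral_weight_pos : 0 < ∫ θ in 0..π, weight m κ θ :=
  intervalIntegral_pos_of_pos_on (intervalIntegrable_weight m κ 0 π)
    (fun _ hθ ↦ mul_pos (exp_pos _) (pow_pos (sin_pos_of_pos_of_lt_pi hθ.1 hθ.2) m)) pi_pos

lemma weight_le_exp_mul_cos (hκ : 0 ≤ κ) (hδ : 0 ≤ δ) (hθ : θ ∈ Icc δ π) :
    weight m κ θ ≤ exp (κ * cos δ) := by
  have hsin : 0 ≤ sin θ := sin_nonneg_of_nonneg_of_le_pi (hδ.trans hθ.1) hθ.2
  calc weight m κ θ ≤ exp (κ * cos δ) * 1 := by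
        refine mul_le_mul (exp_le_exp.2 (mul_le_mul_of_nonneg_left ?_ hκ))
          (pow_le_one₀ hsin (sin_le_one θ)) (pow_nonneg hsin m) (exp_pos _).le
        exact cos_le_cos_of_nonneg_of_le_pi hδ hθ.2 hθ.1
    _ = exp (κ * cos δ) := mul_one _

lemma integral_weight_tail_le (hκ : 0 ≤ κ) (hδ0 : 0 ≤ δ) (hδπ : δ ≤ π) :
    ∫ θ in δ..π, weight m κ θ ≤ π * exp (κ * cos δ) :=
  calc ∫ θ in δ..π, weight m κ θ ≤ ∫ _ in δ..π, exp (κ * cos δ) :=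
        integral_mono_on hδπ (intervalIntegrable_weight m κ δ π) intervalIntegrable_const
          fun _ hθ ↦ weight_le_exp_mul_cos hκ hδ0 hθ
    _ = (π - δ) * exp (κ * cos δ) := by rw [intervalIntegral.integral_const, smul_eq_mul]
    _ ≤ π * exp (κ * cos δ) := by gcongr; linarith

lemma mul_exp_mul_cos_le_integral_weight (hκ : 0 ≤ κ) (hδ0 : 0 < δ) (hδπ : δ ≤ π) :
    δ / 4 * (sin (δ / 4) ^ m * exp (κ * cos (δ / 2))) ≤ ∫ θ in 0..π, weight m κ θ := by
  have hbelow : ∀ θ ∈ Icc (δ / 4) (δ / 2),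
      sin (δ / 4) ^ m * exp (κ * cos (δ / 2)) ≤ weight m κ θ := fun θ hθ ↦ by
    have hθ0 : 0 ≤ θ := by linarith [hθ.1]
    have hsin : sin (δ / 4) ≤ sin θ :=
      sin_le_sin_of_le_of_le_pi_div_two (by linarith) (by linarith [hθ.2]) hθ.1
    have hcos : cos (δ / 2) ≤ cos θ := cos_le_cos_of_nonneg_of_le_pi hθ0 (by linarith) hθ.2
    rw [weight, mul_comm]
    have : 0 ≤ sin (δ / 4) := sin_nonneg_of_nonneg_of_le_pi (by linarith) (by linarith)
    gcongr
  calc δ / 4 * (sin (δ / 4) ^ m * exp (κ * cos (δ / 2)))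
      = ∫ _ in δ / 4..δ / 2, sin (δ / 4) ^ m * exp (κ * cos (δ / 2)) := by
        rw [intervalIntegral.integral_const, smul_eq_mul]; ring
    _ ≤ ∫ θ in δ / 4..δ / 2, weight m κ θ :=
        integral_mono_on (by linarith) intervalIntegrable_const
          (intervalIntegrable_weight m κ _ _) hbelow
    _ ≤ ∫ θ in 0..π, weight m κ θ :=
        integral_mono_interval (by linarith) (by linarith) (by linarith) weight_nonneg_ae
          (intervalIntegrable_weight m κ 0 π)

lemma tendsto_integral_weight_tail_div (m : ℕ) (hδ0 : 0 < δ) (hδπ : δ ≤ π) :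
    Tendsto (fun κ ↦ (∫ θ in δ..π, weight m κ θ) / ∫ θ in 0..π, weight m κ θ)
      atTop (𝓝 0) := by
  set C := 4 * π / (δ * sin (δ / 4) ^ m)
  have hsin : 0 < sin (δ / 4) := sin_pos_of_pos_of_lt_pi (by linarith) (by linarith)
  have hcos : cos δ - cos (δ / 2) < 0 := by
    linarith [strictAntiOn_cos ⟨by linarith, by linarith⟩ ⟨hδ0.le, hδπ⟩
      (by linarith : δ / 2 < δ)]
  have hbound : ∀ᶠ κ in atTop, (∫ θ in δ..π, weight m κ θ) / ∫ θ in 0..π, weight m κ θ ≤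
      C * exp (κ * (cos δ - cos (δ / 2))) := by
    filter_upwards [eventually_ge_atTop 0] with κ hκ
    calc (∫ θ in δ..π, weight m κ θ) / ∫ θ in 0..π, weight m κ θ
        ≤ π * exp (κ * cos δ) / (δ / 4 * (sin (δ / 4) ^ m * exp (κ * cos (δ / 2)))) :=
          div_le_div₀ (by positivity) (integral_weight_tail_le hκ hδ0.le hδπ) (by positivity)
            (mul_exp_mul_cos_le_integral_weight hκ hδ0 hδπ)
      _ = C * exp (κ * (cos δ - cos (δ / 2))) := by
          rw [mul_sub, exp_sub]; simp only [C]; field_simp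
  have hC : Tendsto (fun κ ↦ C * exp (κ * (cos δ - cos (δ / 2)))) atTop (𝓝 0) := by
    simpa using (tendsto_exp_atBot.comp (tendsto_id.atTop_mul_const_of_neg hcos)).const_mul C
  refine squeeze_zero' (.of_forall fun κ ↦ ?_) hbound hC
  exact div_nonneg (integral_nonneg hδπ fun θ hθ ↦ weight_nonneg ⟨hδ0.le.trans hθ.1, hθ.2⟩)
    integral_weight_pos.le

lemma integral_cos_mul_weight_div_le_one :
    (∫ θ in 0..π, cos θ * weight m κ θ) / ∫ θ in 0..π, weight m κ θ ≤ 1 := by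
  refine (div_le_one integral_weight_pos).2 <| integral_mono_on pi_pos.le
    (by apply Continuous.intervalIntegrable; fun_prop) (intervalIntegrable_weight m κ 0 π)
    fun θ hθ ↦ mul_le_of_le_one_left (weight_nonneg hθ) (cos_le_one θ)

lemma integral_one_sub_cos_mul_weight_le (hδ0 : 0 ≤ δ) (hδπ : δ ≤ π) :
    ∫ θ in 0..π, (1 - cos θ) * weight m κ θ ≤
      (1 - cos δ) * (∫ θ in 0..π, weight m κ θ) + 2 * ∫ θ in δ..π, weight m κ θ := by
  have hint : ∀ a b, IntervalIntegrable (fun θ ↦ (1 - cos θ) * weight m κ θ) volume a b :=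
    fun a b ↦ by apply Continuous.intervalIntegrable; fun_prop
  have hhead : ∫ θ in 0..δ, (1 - cos θ) * weight m κ θ ≤
      (1 - cos δ) * ∫ θ in 0..δ, weight m κ θ := by
    rw [← intervalIntegral.integral_const_mul]
    refine integral_mono_on hδ0 (hint 0 δ) ((intervalIntegrable_weight m κ 0 δ).const_mul _)
      fun θ hθ ↦ mul_le_mul_of_nonneg_right ?_ (weight_nonneg ⟨hθ.1, hθ.2.trans hδπ⟩)
    linarith [cos_le_cos_of_nonneg_of_le_pi hθ.1 hδπ hθ.2]
  have htail : ∫ θ in δ..π, (1 - cos θ) * weight m κ θ ≤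
      (1 - cos δ + 2) * ∫ θ in δ..π, weight m κ θ := by
    rw [← intervalIntegral.integral_const_mul]
    refine integral_mono_on hδπ (hint δ π) ((intervalIntegrable_weight m κ δ π).const_mul _)
      fun θ hθ ↦ mul_le_mul_of_nonneg_right ?_ (weight_nonneg ⟨hδ0.trans hθ.1, hθ.2⟩)
    linarith [neg_one_le_cos θ, cos_le_one δ]
  rw [← integral_add_adjacent_intervals (hint 0 δ) (hint δ π),
    ← integral_add_adjacent_intervals (intervalIntegrable_weight m κ 0 δ)
      (intervalIntegrable_weight m κ δ π)]
  linarith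

lemma one_sub_integral_cos_mul_weight_div_le (hδ0 : 0 ≤ δ) (hδπ : δ ≤ π) :
    1 - (∫ θ in 0..π, cos θ * weight m κ θ) / ∫ θ in 0..π, weight m κ θ ≤
      (1 - cos δ) + 2 * ((∫ θ in δ..π, weight m κ θ) / ∫ θ in 0..π, weight m κ θ) := by
  have hD := integral_weight_pos (m := m) (κ := κ)
  have hdiff : (∫ θ in 0..π, weight m κ θ) - ∫ θ in 0..π, cos θ * weight m κ θ =
      ∫ θ in 0..π, (1 - cos θ) * weight m κ θ := by
    rw [← integral_sub (intervalIntegrable_weight m κ 0 π)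
      (by apply Continuous.intervalIntegrable; fun_prop)]
    congr 1; ext θ; ring
  set D := ∫ θ in 0..π, weight m κ θ
  calc 1 - (∫ θ in 0..π, cos θ * weight m κ θ) / D
      = (∫ θ in 0..π, (1 - cos θ) * weight m κ θ) / D := by rw [← hdiff, sub_div, div_self hD.ne']
    _ ≤ ((1 - cos δ) * D + 2 * ∫ θ in δ..π, weight m κ θ) / D := by
        gcongr; exact integral_one_sub_cos_mul_weight_le hδ0 hδπ
    _ = (1 - cos δ) + 2 * ((∫ θ in δ..π, weight m κ θ) / D) := by
        rw [add_div, mul_div_assoc, mul_div_assoc, div_self hD.ne', mul_one]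

lemma exists_one_sub_cos_lt {ε : ℝ} (hε : 0 < ε) : ∃ δ ∈ Ioo 0 π, 1 - cos δ < ε := by
  have hcos : Tendsto (fun δ ↦ 1 - cos δ) (𝓝[>] 0) (𝓝 0) := by
    refine ((continuous_const.sub continuous_cos).tendsto' 0 0 ?_).mono_left nhdsWithin_le_nhds
    simp
  exact (Eventually.and (Ioo_mem_nhdsGT pi_pos) (hcos.eventually (gt_mem_nhds hε))).exists

theorem tendsto_integral_cos_mul_weight_div (m : ℕ) :
    Tendsto (fun κ ↦ (∫ θ in 0..π, cos θ * weight m κ θ) / ∫ θ in 0..π, weight m κ θ)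
      atTop (𝓝 1) := by
  refine tendsto_order.2 ⟨fun a ha ↦ ?_, fun a ha ↦
    .of_forall fun _ ↦ integral_cos_mul_weight_div_le_one.trans_lt ha⟩
  obtain ⟨δ, hδ, hcos⟩ := exists_one_sub_cos_lt (half_pos (sub_pos.2 ha))
  filter_upwards [(tendsto_integral_weight_tail_div m hδ.1 hδ.2.le).eventually
    (gt_mem_nhds (by linarith : (0 : ℝ) < (1 - a) / 4))] with κ htail
  linarith [one_sub_integral_cos_mul_weight_div_le (m := m) (κ := κ) hδ.1.le hδ.2.le]

end VonMises

lemma orderParam_eq (n : ℕ) (κ : ℝ) :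
    orderParam n κ = (∫ θ in 0..π, cos θ * VonMises.weight (n - 2) κ θ) /
      ∫ θ in 0..π, VonMises.weight (n - 2) κ θ := by
  simp only [orderParam, VonMises.weight, mul_assoc]

lemma tendsto_orderParam_atTop (n : ℕ) : Tendsto (orderParam n) atTop (𝓝 1) := by
  simpa only [← orderParam_eq] using VonMises.tendsto_integral_cos_mul_weight_div (n - 2)

lemma sigma0_div_sqrt_eq {κ : ℝ} (hκ : 0 < κ) :
    σ₀ κ / √κ = √(4 + κ⁻¹) / 2 - (2 * √κ)⁻¹ := by
  have h4 : 4 + κ⁻¹ = (1 + 4 * κ) / κ := by field_simp; ring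
  rw [h4, sqrt_div (by positivity), σ₀]
  field_simp

lemma tendsto_sigma0_div_sqrt : Tendsto (fun κ ↦ σ₀ κ / √κ) atTop (𝓝 1) := by
  have hlim : Tendsto (fun κ : ℝ ↦ √(4 + κ⁻¹) / 2 - (2 * √κ)⁻¹) atTop
      (𝓝 (√(4 + 0) / 2 - 0)) :=
    (((tendsto_const_nhds.add tendsto_inv_atTop_zero).sqrt).div_const 2).sub
      (tendsto_inv_atTop_zero.comp (tendsto_sqrt_atTop.const_mul_atTop two_pos))
  rw [show √(4 + 0) / 2 - 0 = (1 : ℝ) by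
    rw [add_zero, sub_zero, show (4 : ℝ) = 2 ^ 2 by norm_num, sqrt_sq zero_le_two,
      div_self two_ne_zero]] at hlim
  exact hlim.congr' ((eventually_gt_atTop 0).mono fun κ hκ ↦ (sigma0_div_sqrt_eq hκ).symm)

theorem orderParam_div_sigma0_large_kappa_general (n : ℕ) :
    Tendsto (fun κ : ℝ => Real.sqrt κ * (orderParam n κ / σ₀ κ)) atTop (nhds 1) := by
  have hσ : Tendsto (fun κ ↦ √κ / σ₀ κ) atTop (𝓝 1) := by
    simpa only [inv_div, inv_one] using tendsto_sigma0_div_sqrt.inv₀ one_ne_zero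
  have h := hσ.mul (tendsto_orderParam_atTop n)
  rw [one_mul] at h
  exact h.congr fun κ ↦ by ring

/-- Large-`κ` behavior: `c(κ)/σ₀(κ) ∼ 1/√κ`, in the precise form
`√κ · c(κ)/σ₀(κ) → 1` as `κ → ∞`. -/
theorem orderParam_div_sigma0_large_kappa (n : ℕ) (hn : 2 ≤ n) :
    Tendsto (fun κ : ℝ => Real.sqrt κ * (orderParam n κ / σ₀ κ)) atTop (nhds 1) :=
  orderParam_div_sigma0_large_kappa_general n
end
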